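/- arXiv:2209.13179 — 5 statements merged into one kernel-verified Lean document; each statement's English description precedes it below -/
import Mathlib

section
/- (Soundness of the synthesis algorithm.) Let f be a classifier on ℝ^d, let S be a set of sensitive features, and let U be a family of subsets of ℝ^d with the over-approximation property: for every instance x, if there exists z ∈ flip_S(x) with f(z) ≠ f(x), then x ∈ H for some H ∈ U. If an itemset I satisfies ⟦I⟧ ∩ H = ∅ for every H ∈ U, then f does not perform causal discrimination on ⟦I⟧. -/
def flipSet {d : ℕ} (S : Set (Fin d)) (x : Fin d → ℝ) : Set (Fin d → ℝ) :=
  {z | ∀ j ∉ S, z j = x j}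

def NoCausalDiscrimination {d : ℕ} {Y : Type*} (f : (Fin d → ℝ) → Y)
    (S : Set (Fin d)) (X' : Set (Fin d → ℝ)) : Prop :=
  ∀ x ∈ X', ∀ z ∈ flipSet S x, f z = f x

/-- An item is a constraint `x f ≤ v` or `x f > v`. -/
inductive Item (d : ℕ) where
  | le (f : Fin d) (v : ℝ)
  | gt (f : Fin d) (v : ℝ)

/-- Interpretation of an item as a half-space of ℝ^d. -/
noncomputable instance {d : ℕ} : DecidableEq (Item d) := fun _ _ => Classical.dec _

def Item.interp {d : ℕ} : Item d → Set (Fin d → ℝ)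
  | .le f v => {x | x f ≤ v}
  | .gt f v => {x | v < x f}

/-- Interpretation of an itemset: intersection of the interpretations of its items. -/
def interpItemset {d : ℕ} (I : Finset (Item d)) : Set (Fin d → ℝ) :=
  ⋂ i ∈ I, i.interp

theorem synthesis_sound {d : ℕ} {Y : Type*} (f : (Fin d → ℝ) → Y)
    (S : Set (Fin d)) (U : Set (Set (Fin d → ℝ)))
    (hU : ∀ x : Fin d → ℝ, (∃ z ∈ flipSet S x, f z ≠ f x) → ∃ H ∈ U, x ∈ H)
    (I : Finset (Item d)) (hI : ∀ H ∈ U, interpItemset I ∩ H = ∅) :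
    NoCausalDiscrimination f S (interpItemset I) := by
  intro x hx z hz
  by_contra hne
  obtain ⟨H, hHU, hxH⟩ := hU x ⟨z, hz, hne⟩
  have := hI H hHU
  exact absurd this (by
    intro h
    exact (Set.eq_empty_iff_forall_notMem.mp h x) ⟨hx, hxH⟩)
end

section
/- (Witness itemset lemma, the ⊇ direction of completeness.) Let U be a finite family of hyper-rectangles in ℝ^d, each H ∈ U given by bounds l_H, u_H : Fin d → EReal. If x ∉ ⋃_{H ∈ U} H, then there exists an itemset I, all of whose items are of the form z_f ≤ l_H(f) (with l_H(f) ∈ ℝ) or z_f > u_H(f) (with u_H(f) ∈ ℝ) for some H ∈ U and feature f, such that x ∈ ⟦I⟧ and ⟦I⟧ ∩ H = ∅ for every H ∈ U. -/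
def hyperRect {d : ℕ} (l u : Fin d → EReal) : Set (Fin d → ℝ) :=
  {x | ∀ f, l f < (x f : EReal) ∧ (x f : EReal) ≤ u f}

/-- A face item of a family `U` of hyper-rectangles (each given by its pair of bounds):
an item `z f ≤ v` with `v = l_H f ∈ ℝ` for some `H ∈ U`, or `z f > v` with `v = u_H f ∈ ℝ`. -/
def IsFaceItem {d : ℕ} (U : Set ((Fin d → EReal) × (Fin d → EReal))) : Item d → Prop
  | .le f v => ∃ H ∈ U, (v : EReal) = H.1 f
  | .gt f v => ∃ H ∈ U, (v : EReal) = H.2 f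

theorem witness_itemset {d : ℕ}
    (U : Set ((Fin d → EReal) × (Fin d → EReal))) (hUfin : U.Finite)
    (x : Fin d → ℝ) (hx : x ∉ ⋃ H ∈ U, hyperRect H.1 H.2) :
    ∃ I : Finset (Item d),
      (∀ i ∈ I, IsFaceItem U i) ∧
      x ∈ interpItemset I ∧
      ∀ H ∈ U, interpItemset I ∩ hyperRect H.1 H.2 = ∅ := by
  classical
  have key : ∀ H ∈ U, (hyperRect H.1 H.2).Nonempty →
      ∃ i : Item d, IsFaceItem U i ∧ x ∈ i.interp ∧ i.interp ∩ hyperRect H.1 H.2 = ∅ := by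
    intro H hH hne
    have hxH : x ∉ hyperRect H.1 H.2 := fun h => hx (Set.mem_biUnion hH h)
    simp only [hyperRect, Set.mem_setOf_eq, not_forall] at hxH
    obtain ⟨f, hf⟩ := hxH
    obtain ⟨y, hy⟩ := hne
    have hyf := hy f
    rw [not_and_or, not_lt, not_le] at hf
    rcases hf with hle | hgt
    · -- x f ≤ H.1 f
      have hbot : H.1 f ≠ ⊥ := fun h => by
        rw [h] at hle; exact (EReal.bot_lt_coe (x f)).not_ge hle
      have htop : H.1 f ≠ ⊤ := fun h => by
        rw [h] at hyf; exact (lt_irrefl _ (hyf.1.trans (EReal.coe_lt_top (y f))))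
      have hcoe : ((H.1 f).toReal : EReal) = H.1 f := EReal.coe_toReal htop hbot
      refine ⟨.le f (H.1 f).toReal, ⟨H, hH, hcoe⟩, ?_, ?_⟩
      · show x f ≤ (H.1 f).toReal
        rw [← EReal.coe_le_coe_iff, hcoe]; exact hle
      · ext z
        simp only [Set.mem_inter_iff, Set.mem_empty_iff_false, iff_false, not_and]
        intro hz hzH
        have h1 := (hzH f).1
        have h2 : (z f : EReal) ≤ H.1 f := by
          rw [← hcoe, EReal.coe_le_coe_iff]; exact hz
        exact (h1.not_ge h2).elim
    · -- H.2 f < x f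
      have htop : H.2 f ≠ ⊤ := fun h => by
        rw [h] at hgt; exact (lt_irrefl _ (hgt.trans (EReal.coe_lt_top (x f))))
      have hbot : H.2 f ≠ ⊥ := fun h => by
        rw [h] at hyf; exact (EReal.bot_lt_coe (y f)).not_ge hyf.2
      have hcoe : ((H.2 f).toReal : EReal) = H.2 f := EReal.coe_toReal htop hbot
      refine ⟨.gt f (H.2 f).toReal, ⟨H, hH, hcoe⟩, ?_, ?_⟩
      · show (H.2 f).toReal < x f
        rw [← EReal.coe_lt_coe_iff, hcoe]; exact hgt
      · ext z
        simp only [Set.mem_inter_iff, Set.mem_empty_iff_false, iff_false, not_and]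
        intro hz hzH
        have h1 := (hzH f).2
        have h2 : H.2 f < (z f : EReal) := by
          rw [← hcoe, EReal.coe_lt_coe_iff]; exact hz
        exact (h2.not_ge h1).elim
  by_cases hall : ∀ H ∈ U, hyperRect H.1 H.2 = ∅
  · refine ⟨∅, by simp, by simp [interpItemset], fun H hH => by simp [hall H hH]⟩
  · push_neg at hall
    obtain ⟨H₀, hH₀, hne₀⟩ := hall
    obtain ⟨i₀, hi₀face, hi₀x, hi₀emp⟩ :=
      key H₀ hH₀ hne₀
    have key' : ∀ H ∈ U, ∃ i : Item d,
        IsFaceItem U i ∧ x ∈ i.interp ∧ i.interp ∩ hyperRect H.1 H.2 = ∅ := by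
      intro H hH
      by_cases hne : (hyperRect H.1 H.2).Nonempty
      · exact key H hH hne
      · rw [Set.not_nonempty_iff_eq_empty] at hne
        exact ⟨i₀, hi₀face, hi₀x, by simp [hne]⟩
    choose g hg1 hg2 hg3 using key'
    refine ⟨hUfin.toFinset.attach.image
      (fun H => g H.1 (hUfin.mem_toFinset.mp H.2)), ?_, ?_, ?_⟩
    · intro i hi
      simp only [Finset.mem_image] at hi
      obtain ⟨H, _, rfl⟩ := hi
      exact hg1 _ _
    · simp only [interpItemset, Set.mem_iInter]
      intro i hi
      simp only [Finset.mem_image] at hi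
      obtain ⟨H, _, rfl⟩ := hi
      exact hg2 _ _
    · intro H hH
      apply Set.eq_empty_of_subset_empty
      intro z hz
      have hmem : g H hH ∈ hUfin.toFinset.attach.image
          (fun H => g H.1 (hUfin.mem_toFinset.mp H.2)) := by
        refine Finset.mem_image.mpr ⟨⟨H, hUfin.mem_toFinset.mpr hH⟩, Finset.mem_attach _ _, rfl⟩
      have hz1 : z ∈ (g H hH).interp := by
        have := hz.1
        simp only [interpItemset, Set.mem_iInter] at this
        exact this _ hmem
      rw [← hg3 H hH]
      exact ⟨hz1, hz.2⟩
end

section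
/- (VoTE counter-example lemma.) Let T be a classifier on ℝ^d, S a set of sensitive features, and let H₁, H₂ be nonempty sets of the form H_m = {x | ∀ f, x_f ∈ J_m(f)} where each J_m(f) ⊆ ℝ is a nonempty interval, such that T is constantly equal to y₁ on H₁ and constantly equal to y₂ on H₂ with y₁ ≠ y₂. If for every feature j ∉ S the intervals J₁(j) and J₂(j) have nonempty intersection, then there exist instances x₁ ∈ H₁ and x₂ ∈ H₂ with x₂ ∈ flip_S(x₁) and T(x₁) ≠ T(x₂); in particular, T performs causal discrimination on H₁ ∪ H₂. -/
theorem vote_counterexample {d : ℕ} {Y : Type*} (T : (Fin d → ℝ) → Y)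
    (S : Set (Fin d)) (J₁ J₂ : Fin d → Set ℝ)
    (hJ₁ : ∀ f, (J₁ f).Nonempty ∧ (J₁ f).OrdConnected)
    (hJ₂ : ∀ f, (J₂ f).Nonempty ∧ (J₂ f).OrdConnected)
    (H₁ H₂ : Set (Fin d → ℝ))
    (hH₁ : H₁ = {x | ∀ f, x f ∈ J₁ f}) (hH₂ : H₂ = {x | ∀ f, x f ∈ J₂ f})
    (hH₁ne : H₁.Nonempty) (hH₂ne : H₂.Nonempty)
    (y₁ y₂ : Y) (hy : y₁ ≠ y₂)
    (hT₁ : ∀ x ∈ H₁, T x = y₁) (hT₂ : ∀ x ∈ H₂, T x = y₂)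
    (hmeet : ∀ j ∉ S, (J₁ j ∩ J₂ j).Nonempty) :
    (∃ x₁ ∈ H₁, ∃ x₂ ∈ H₂, x₂ ∈ flipSet S x₁ ∧ T x₁ ≠ T x₂) ∧
    ¬ NoCausalDiscrimination T S (H₁ ∪ H₂) := by
  classical
  set x₁ : Fin d → ℝ := fun j => if h : j ∈ S then (hJ₁ j).1.choose else (hmeet j h).choose with hx₁
  set x₂ : Fin d → ℝ := fun j => if h : j ∈ S then (hJ₂ j).1.choose else (hmeet j h).choose with hx₂
  have hx₁H : x₁ ∈ H₁ := by
    rw [hH₁]; intro f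
    by_cases h : f ∈ S
    · simp only [hx₁, dif_pos h]; exact (hJ₁ f).1.choose_spec
    · simp only [hx₁, dif_neg h]; exact (hmeet f h).choose_spec.1
  have hx₂H : x₂ ∈ H₂ := by
    rw [hH₂]; intro f
    by_cases h : f ∈ S
    · simp only [hx₂, dif_pos h]; exact (hJ₂ f).1.choose_spec
    · simp only [hx₂, dif_neg h]; exact (hmeet f h).choose_spec.2
  have hflip : x₂ ∈ flipSet S x₁ := by
    intro j hj
    simp only [hx₁, hx₂, dif_neg hj]
  have hne : T x₁ ≠ T x₂ := by
    rw [hT₁ x₁ hx₁H, hT₂ x₂ hx₂H]; exact hy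
  refine ⟨⟨x₁, hx₁H, x₂, hx₂H, hflip, hne⟩, fun hnc => ?_⟩
  exact hne (hnc x₁ (Or.inl hx₁H) x₂ hflip).symm
end

section
/- (Box subtraction produces at most 2d boxes.) Let A and B be hyper-rectangles in ℝ^d, i.e., sets of the form {x | ∀ f, l f < x f ≤ u f} for bounds l, u : Fin d → EReal. Then there exists a family of at most 2d pairwise disjoint hyper-rectangles of the same form whose union equals the set difference A \ B. -/
/-- lower bounds of the box indexed by coordinate `k` and side `s`. -/
noncomputable def bxl {d : ℕ} (lA lB uB : Fin d → EReal) (k s : ℕ) (f : Fin d) : EReal :=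
  if f.val < k then lA f ⊔ lB f
  else if f.val = k then (if s = 0 then lA f else lA f ⊔ lB f ⊔ uB f)
  else lA f

/-- upper bounds of the box indexed by coordinate `k` and side `s`. -/
noncomputable def bxu {d : ℕ} (uA lB uB : Fin d → EReal) (k s : ℕ) (f : Fin d) : EReal :=
  if f.val < k then uA f ⊓ uB f
  else if f.val = k then (if s = 0 then uA f ⊓ lB f else uA f)
  else uA f

lemma mem_bx {d : ℕ} (lA uA lB uB : Fin d → EReal) (k s : ℕ) (x : Fin d → ℝ) :
    x ∈ hyperRect (bxl lA lB uB k s) (bxu uA lB uB k s) ↔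
      (∀ f, lA f < (x f : EReal) ∧ (x f : EReal) ≤ uA f) ∧
      (∀ f : Fin d, f.val < k → (lB f < (x f : EReal) ∧ (x f : EReal) ≤ uB f)) ∧
      (∀ f : Fin d, f.val = k →
        if s = 0 then (x f : EReal) ≤ lB f
        else (lB f < (x f : EReal) ∧ uB f < (x f : EReal))) := by
  unfold hyperRect bxl bxu
  simp only [Set.mem_setOf_eq]
  constructor
  · intro hx
    refine ⟨fun f => ?_, fun f hf => ?_, fun f hf => ?_⟩
    · have h := hx f
      rcases lt_trichotomy f.val k with hc | hc | hc
      · simp only [if_pos hc] at h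
        exact ⟨(sup_lt_iff.mp h.1).1, (le_inf_iff.mp h.2).1⟩
      · simp only [hc, lt_irrefl, if_neg, if_true, if_false, Nat.lt_irrefl] at h
        by_cases hs : s = 0
        · rw [if_pos hs] at h
          rw [if_pos hs] at h
          exact ⟨h.1, (le_inf_iff.mp h.2).1⟩
        · rw [if_neg hs] at h
          rw [if_neg hs] at h
          exact ⟨(sup_lt_iff.mp (sup_lt_iff.mp h.1).1).1, h.2⟩
      · have h1 : ¬ f.val < k := by omega
        have h2 : ¬ f.val = k := by omega
        rw [if_neg h1, if_neg h2, if_neg h1, if_neg h2] at h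
        exact h
    · have h := hx f
      rw [if_pos hf, if_pos hf] at h
      exact ⟨(sup_lt_iff.mp h.1).2, (le_inf_iff.mp h.2).2⟩
    · have h := hx f
      have h1 : ¬ f.val < k := by omega
      rw [if_neg h1, if_pos hf, if_neg h1, if_pos hf] at h
      by_cases hs : s = 0
      · rw [if_pos hs] at h
        rw [if_pos hs] at h
        simp only [if_pos hs]
        exact (le_inf_iff.mp h.2).2
      · rw [if_neg hs] at h
        rw [if_neg hs] at h
        simp only [if_neg hs]
        exact ⟨(sup_lt_iff.mp (sup_lt_iff.mp h.1).1).2, (sup_lt_iff.mp h.1).2⟩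
  · rintro ⟨hA, hQ, hK⟩ f
    rcases lt_trichotomy f.val k with hc | hc | hc
    · rw [if_pos hc, if_pos hc]
      exact ⟨sup_lt_iff.mpr ⟨(hA f).1, (hQ f hc).1⟩,
        le_inf_iff.mpr ⟨(hA f).2, (hQ f hc).2⟩⟩
    · have h1 : ¬ f.val < k := by omega
      rw [if_neg h1, if_pos hc, if_neg h1, if_pos hc]
      have hk := hK f hc
      by_cases hs : s = 0
      · rw [if_pos hs] at hk ⊢
        rw [if_pos hs]
        exact ⟨(hA f).1, le_inf_iff.mpr ⟨(hA f).2, hk⟩⟩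
      · rw [if_neg hs] at hk ⊢
        rw [if_neg hs]
        exact ⟨sup_lt_iff.mpr ⟨sup_lt_iff.mpr ⟨(hA f).1, hk.1⟩, hk.2⟩, (hA f).2⟩
    · have h1 : ¬ f.val < k := by omega
      have h2 : ¬ f.val = k := by omega
      rw [if_neg h1, if_neg h2, if_neg h1, if_neg h2]
      exact hA f

theorem box_subtraction {d : ℕ} (lA uA lB uB : Fin d → EReal) :
    ∃ (n : ℕ) (l u : Fin n → (Fin d → EReal)),
      n ≤ 2 * d ∧
      (Pairwise fun i j => Disjoint (hyperRect (l i) (u i)) (hyperRect (l j) (u j))) ∧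
      (⋃ i, hyperRect (l i) (u i)) = hyperRect lA uA \ hyperRect lB uB := by
  classical
  refine ⟨2 * d, fun i => bxl lA lB uB (i.val / 2) (i.val % 2),
    fun i => bxu uA lB uB (i.val / 2) (i.val % 2), le_refl _, ?_, ?_⟩
  · -- pairwise disjoint
    intro i j hij
    rw [Set.disjoint_left]
    intro x hxi hxj
    rw [mem_bx] at hxi hxj
    rcases lt_trichotomy (i.val / 2) (j.val / 2) with hc | hc | hc
    · have hlt : i.val / 2 < d := by have := i.2; omega
      set f : Fin d := ⟨i.val / 2, hlt⟩
      have hQ := hxj.2.1 f hc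
      have hF := hxi.2.2 f rfl
      by_cases hs : i.val % 2 = 0
      · rw [if_pos hs] at hF
        exact absurd hQ.1 (not_lt.mpr hF)
      · rw [if_neg hs] at hF
        exact absurd hQ.2 (not_le.mpr hF.2)
    · have hij' : i.val % 2 ≠ j.val % 2 := by
        intro h
        exact hij (Fin.ext (by omega))
      have hlt : i.val / 2 < d := by have := i.2; omega
      set f : Fin d := ⟨i.val / 2, hlt⟩
      have hFi := hxi.2.2 f rfl
      have hFj := hxj.2.2 f hc
      rcases Nat.mod_two_eq_zero_or_one i.val with hi0 | hi1
      · have hj1 : j.val % 2 ≠ 0 := by omega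
        rw [if_pos hi0] at hFi
        rw [if_neg hj1] at hFj
        exact absurd hFj.1 (not_lt.mpr hFi)
      · have hi0 : i.val % 2 ≠ 0 := by omega
        have hj0 : j.val % 2 = 0 := by omega
        rw [if_neg hi0] at hFi
        rw [if_pos hj0] at hFj
        exact absurd hFi.1 (not_lt.mpr hFj)
    · have hlt : j.val / 2 < d := by have := j.2; omega
      set f : Fin d := ⟨j.val / 2, hlt⟩
      have hQ := hxi.2.1 f hc
      have hF := hxj.2.2 f rfl
      by_cases hs : j.val % 2 = 0
      · rw [if_pos hs] at hF
        exact absurd hQ.1 (not_lt.mpr hF)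
      · rw [if_neg hs] at hF
        exact absurd hQ.2 (not_le.mpr hF.2)
  · -- union
    ext x
    simp only [Set.mem_iUnion, Set.mem_diff]
    constructor
    · rintro ⟨i, hx⟩
      rw [mem_bx] at hx
      refine ⟨hx.1, ?_⟩
      intro hB
      have hlt : i.val / 2 < d := by have := i.2; omega
      set f : Fin d := ⟨i.val / 2, hlt⟩
      have hF := hx.2.2 f rfl
      have hQ := hB f
      by_cases hs : i.val % 2 = 0
      · rw [if_pos hs] at hF
        exact absurd hQ.1 (not_lt.mpr hF)
      · rw [if_neg hs] at hF
        exact absurd hQ.2 (not_le.mpr hF.2)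
    · rintro ⟨hA, hB⟩
      have hB' : ∃ m, ∃ h : m < d,
          ¬(lB ⟨m, h⟩ < (x ⟨m, h⟩ : EReal) ∧ (x ⟨m, h⟩ : EReal) ≤ uB ⟨m, h⟩) := by
        by_contra h
        push_neg at h
        exact hB (fun f => h f.val f.2)
      set P : ℕ → Prop := fun m => ∃ h : m < d,
          ¬(lB ⟨m, h⟩ < (x ⟨m, h⟩ : EReal) ∧ (x ⟨m, h⟩ : EReal) ≤ uB ⟨m, h⟩) with hP
      have hex : ∃ m, P m := hB'
      set k := Nat.find hex with hk
      obtain ⟨hkd, hknot⟩ := Nat.find_spec hex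
      have hmin : ∀ m, m < k → ¬ P m := fun m hm => Nat.find_min hex hm
      set fk : Fin d := ⟨k, hkd⟩
      have hQlt : ∀ f : Fin d, f.val < k →
          (lB f < (x f : EReal) ∧ (x f : EReal) ≤ uB f) := by
        intro f hf
        have hnot := hmin f.val hf
        rw [hP] at hnot
        have h2 : ¬¬(lB ⟨f.val, f.2⟩ < (x ⟨f.val, f.2⟩ : EReal) ∧
            (x ⟨f.val, f.2⟩ : EReal) ≤ uB ⟨f.val, f.2⟩) := fun hc => hnot ⟨f.2, hc⟩
        rw [not_not] at h2
        rwa [Fin.eta] at h2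
      by_cases hs : (x fk : EReal) ≤ lB fk
      · refine ⟨⟨2 * k, by omega⟩, ?_⟩
        rw [mem_bx]
        have hdiv : 2 * k / 2 = k := by omega
        have hmod : 2 * k % 2 = 0 := by omega
        simp only [hdiv, hmod, if_pos rfl]
        refine ⟨hA, hQlt, ?_⟩
        intro f hf
        have : f = fk := Fin.ext hf
        rw [this]
        exact hs
      · refine ⟨⟨2 * k + 1, by omega⟩, ?_⟩
        rw [mem_bx]
        have hdiv : (2 * k + 1) / 2 = k := by omega
        have hmod : (2 * k + 1) % 2 = 1 := by omega
        simp only [hdiv, hmod]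
        refine ⟨hA, hQlt, ?_⟩
        intro f hf
        have hfk : f = fk := Fin.ext hf
        rw [hfk]
        have hlbx : lB fk < (x fk : EReal) := not_le.mp hs
        have hubx : uB fk < (x fk : EReal) := by
          by_contra h
          exact hknot ⟨hlbx, not_lt.mp h⟩
        simp only [if_neg (by norm_num : (1 : ℕ) ≠ 0)]
        exact ⟨hlbx, hubx⟩
end

section
/- (Every itemset interpretation is a hyper-rectangle.) For every itemset I there exist bounds l, u : Fin d → EReal such that ⟦I⟧ = {x : Fin d → ℝ | ∀ f, l f < x f ≤ u f} (inequalities in the extended reals). In particular, the interpretation of any itemset is a possibly empty axis-aligned product of half-open intervals. -/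
theorem itemset_is_hyperRect {d : ℕ} (I : Finset (Item d)) :
    ∃ l u : Fin d → EReal, interpItemset I = hyperRect l u := by
  classical
  induction I using Finset.induction_on with
  | empty =>
    refine ⟨fun _ => ⊥, fun _ => ⊤, ?_⟩
    ext x
    simp [interpItemset, hyperRect, EReal.bot_lt_coe, le_top]
  | @insert i I hni ih =>
    obtain ⟨l, u, hIu⟩ := ih
    have hins : interpItemset (insert i I) = i.interp ∩ interpItemset I := by
      simp [interpItemset, Set.biInter_insert]
    cases i with
    | le f v =>
      refine ⟨l, Function.update u f (min (u f) (v : EReal)), ?_⟩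
      ext x
      simp only [hins, hIu, Set.mem_inter_iff, hyperRect, Set.mem_setOf_eq, Item.interp]
      constructor
      · rintro ⟨hv, h⟩ g
        rcases eq_or_ne g f with rfl | hg
        · simp only [Function.update_self]
          exact ⟨(h g).1, le_min (h g).2 (EReal.coe_le_coe_iff.2 hv)⟩
        · simpa [Function.update_of_ne hg] using h g
      · intro h
        have hf := h f
        simp only [Function.update_self, le_min_iff] at hf
        refine ⟨EReal.coe_le_coe_iff.1 hf.2.2, fun g => ?_⟩
        rcases eq_or_ne g f with rfl | hg
        · exact ⟨hf.1, hf.2.1⟩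
        · simpa [Function.update_of_ne hg] using h g
    | gt f v =>
      refine ⟨Function.update l f (max (l f) (v : EReal)), u, ?_⟩
      ext x
      simp only [hins, hIu, Set.mem_inter_iff, hyperRect, Set.mem_setOf_eq, Item.interp]
      constructor
      · rintro ⟨hv, h⟩ g
        rcases eq_or_ne g f with rfl | hg
        · simp only [Function.update_self]
          exact ⟨max_lt (h g).1 (EReal.coe_lt_coe_iff.2 hv), (h g).2⟩
        · simpa [Function.update_of_ne hg] using h g
      · intro h
        have hf := h f
        simp only [Function.update_self, max_lt_iff] at hf
        refine ⟨EReal.coe_lt_coe_iff.1 hf.1.2, fun g => ?_⟩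
        rcases eq_or_ne g f with rfl | hg
        · exact ⟨hf.1.1, hf.2⟩
        · simpa [Function.update_of_ne hg] using h g
end
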